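/- arXiv:1503.06413 — 4 statements merged into one kernel-verified Lean document; each statement's English description precedes it below -/
import Mathlib

section
/- Fine's theorem (one direction): if a phenomenon f(A,B|a,b,c) admits a Bell-local model (f(A,B|a,b,c) = Σ_λ P(A|a,c,λ)·P(B|b,c,λ)·P(λ|c) with finitely many settings and outcomes), then it admits a model satisfying both locality and predetermination, i.e. there is a distribution μ over deterministic assignment functions λ' = (functions α from settings a to outcomes A, functions β from settings b to outcomes B) such that f(A,B|a,b,c) = Σ_{α,β : α(a)=A, β(b)=B} μ(α,β). -/
lemma key_sum {S O : Type} [Fintype S] [Fintype O] [DecidableEq S] [DecidableEq O]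
    (g : O → S → ℝ) (hnorm : ∀ s, ∑ o, g o s = 1) (a : S) (A : O) :
    ∑ α : S → O, (if α a = A then (∏ s, g (α s) s) else 0) = g A a := by
  have h1 : ∀ α : S → O,
      (if α a = A then (∏ s, g (α s) s) else 0)
        = ∏ s, (if s = a then (if α s = A then g (α s) s else 0) else g (α s) s) := by
    intro α
    by_cases hA : α a = A
    · simp only [hA, if_true]
      refine Finset.prod_congr rfl fun s _ => ?_
      by_cases hs : s = a <;> simp [hs, hA]
    · simp only [hA, if_false]
      rw [eq_comm]
      apply Finset.prod_eq_zero (Finset.mem_univ a)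
      simp [hA]
  rw [Finset.sum_congr rfl fun α _ => h1 α]
  rw [← Fintype.prod_sum (fun s o => if s = a then (if o = A then g o s else 0) else g o s)]
  have h2 : ∀ s, (∑ o, if s = a then (if o = A then g o s else 0) else g o s)
      = if s = a then g A s else 1 := by
    intro s
    by_cases hs : s = a <;> simp [hs, hnorm s]
  rw [Finset.prod_congr rfl fun s _ => h2 s]
  simp

lemma norm_sum {S O : Type} [Fintype S] [Fintype O] [DecidableEq S]
    (g : O → S → ℝ) (hnorm : ∀ s, ∑ o, g o s = 1) :
    ∑ α : S → O, ∏ s, g (α s) s = 1 := by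
  rw [← Fintype.prod_sum (fun s o => g o s)]
  simp [hnorm]

/-- Fine's theorem (one direction): a Bell-local model yields a local
deterministic model, i.e. a distribution over deterministic assignment
functions reproducing the same phenomenon. -/
theorem stmt2
    (OA OB SA SB C Λ : Type)
    [Fintype OA] [Fintype OB] [Fintype SA] [Fintype SB] [Fintype Λ]
    [DecidableEq SA] [DecidableEq SB] [DecidableEq OA] [DecidableEq OB]
    (pl : Λ → C → ℝ)
    (PA : OA → SA → C → Λ → ℝ) (PB : OB → SB → C → Λ → ℝ)
    (f : OA → OB → SA → SB → C → ℝ)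
    (hplnn : ∀ l c, 0 ≤ pl l c) (hplnorm : ∀ c, ∑ l, pl l c = 1)
    (hPAnn : ∀ A a c l, 0 ≤ PA A a c l) (hPAnorm : ∀ a c l, ∑ A, PA A a c l = 1)
    (hPBnn : ∀ B b c l, 0 ≤ PB B b c l) (hPBnorm : ∀ b c l, ∑ B, PB B b c l = 1)
    (hrep : ∀ A B a b c, f A B a b c = ∑ l, PA A a c l * PB B b c l * pl l c) :
    ∃ μ : (SA → OA) → (SB → OB) → C → ℝ,
      (∀ α β c, 0 ≤ μ α β c) ∧
      (∀ c, ∑ α, ∑ β, μ α β c = 1) ∧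
      (∀ A B a b c, f A B a b c
        = ∑ α, ∑ β, (if α a = A ∧ β b = B then μ α β c else 0)) := by
  refine ⟨fun α β c => ∑ l, (∏ a, PA (α a) a c l) * (∏ b, PB (β b) b c l) * pl l c,
    ?_, ?_, ?_⟩
  · intro α β c
    apply Finset.sum_nonneg
    intro l _
    exact mul_nonneg (mul_nonneg (Finset.prod_nonneg fun a _ => hPAnn _ _ _ _)
      (Finset.prod_nonneg fun b _ => hPBnn _ _ _ _)) (hplnn _ _)
  · intro c
    have : ∀ α : SA → OA, ∑ β : SB → OB,
        ∑ l, (∏ a, PA (α a) a c l) * (∏ b, PB (β b) b c l) * pl l c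
        = ∑ l, (∏ a, PA (α a) a c l) * pl l c := by
      intro α
      rw [Finset.sum_comm]
      refine Finset.sum_congr rfl fun l _ => ?_
      rw [← Finset.sum_mul, ← Finset.mul_sum,
        norm_sum (fun B b => PB B b c l) (fun b => hPBnorm b c l), mul_one]
    rw [Finset.sum_congr rfl fun α _ => this α, Finset.sum_comm]
    calc ∑ l, ∑ α : SA → OA, (∏ a, PA (α a) a c l) * pl l c
        = ∑ l, pl l c := by
          refine Finset.sum_congr rfl fun l _ => ?_
          rw [← Finset.sum_mul, norm_sum (fun A a => PA A a c l) (fun a => hPAnorm a c l),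
            one_mul]
      _ = 1 := hplnorm c
  · intro A B a b c
    rw [hrep]
    have hsplit : ∀ (α : SA → OA) (β : SB → OB),
        (if α a = A ∧ β b = B then
          ∑ l, (∏ a', PA (α a') a' c l) * (∏ b', PB (β b') b' c l) * pl l c else 0)
        = ∑ l, (if α a = A then ∏ a', PA (α a') a' c l else 0)
            * (if β b = B then ∏ b', PB (β b') b' c l else 0) * pl l c := by
      intro α β
      by_cases h1 : α a = A <;> by_cases h2 : β b = B <;> simp [h1, h2]
    rw [Finset.sum_congr rfl fun α _ => Finset.sum_congr rfl fun β _ => hsplit α β]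
    rw [Finset.sum_congr rfl fun α _ => Finset.sum_comm, Finset.sum_comm]
    refine Finset.sum_congr rfl fun l _ => ?_
    have : ∀ α : SA → OA, ∑ β : SB → OB,
        (if α a = A then ∏ a', PA (α a') a' c l else 0)
          * (if β b = B then ∏ b', PB (β b') b' c l else 0) * pl l c
        = (if α a = A then ∏ a', PA (α a') a' c l else 0) * PB B b c l * pl l c := by
      intro α
      rw [← Finset.sum_mul, ← Finset.mul_sum,
        key_sum (fun B' b' => PB B' b' c l) (fun b' => hPBnorm b' c l) b B]
    rw [Finset.sum_congr rfl fun α _ => this α, ← Finset.sum_mul, ← Finset.sum_mul,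
      key_sum (fun A' a' => PA A' a' c l) (fun a' => hPAnorm a' c l) a A]
end

section
/- Fine's theorem (equivalence): a phenomenon f(A,B|a,b,c) with finite settings and outcomes admits a model satisfying local causality if and only if it admits a model satisfying locality and predetermination. -/
/-- Sum over all response functions, restricted to those giving outcome `A` at
setting `a`, of the product of the response weights, equals the weight of `A` at `a`. -/
lemma fine_key {S O : Type} [Fintype S] [Fintype O] [DecidableEq S] [DecidableEq O]
    (q : S → O → ℝ) (hq : ∀ s, ∑ o, q s o = 1) (a : S) (A : O) :
    ∑ g : S → O, (if g a = A then ∏ s, q s (g s) else 0) = q a A := by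
  have h : ∀ g : S → O,
      (if g a = A then ∏ s, q s (g s) else 0)
        = ∏ s, (if s = a then (if g s = A then q s (g s) else 0) else q s (g s)) := by
    intro g
    by_cases hA : g a = A
    · simp only [if_pos hA]
      refine Finset.prod_congr rfl fun s _ => ?_
      by_cases hs : s = a
      · subst hs; simp [hA]
      · simp [hs]
    · rw [if_neg hA]
      refine (Finset.prod_eq_zero (Finset.mem_univ a) ?_).symm
      simp [hA]
  simp only [h]
  rw [← Fintype.prod_sum (fun s o => if s = a then (if o = A then q s o else 0) else q s o)]
  have h2 : ∀ s : S, (∑ o, if s = a then (if o = A then q s o else 0) else q s o)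
      = if s = a then q a A else 1 := by
    intro s
    by_cases hs : s = a
    · subst hs; simp
    · simp [hs, hq s]
  simp only [h2]
  simp

lemma fine_norm {S O : Type} [Fintype S] [Fintype O] [DecidableEq S] [DecidableEq O]
    (q : S → O → ℝ) (hq : ∀ s, ∑ o, q s o = 1) :
    ∑ g : S → O, ∏ s, q s (g s) = 1 := by
  rw [← Fintype.prod_sum]
  simp [hq]

/-- Fine's theorem (equivalence): a phenomenon admits a locally causal model
iff it admits a local deterministic model. -/
theorem stmt3
    (OA OB SA SB C : Type)
    [Fintype OA] [Fintype OB] [Fintype SA] [Fintype SB]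
    [DecidableEq SA] [DecidableEq SB] [DecidableEq OA] [DecidableEq OB]
    (f : OA → OB → SA → SB → C → ℝ)
    (hfnn : ∀ A B a b c, 0 ≤ f A B a b c)
    (hfnorm : ∀ a b c, ∑ A, ∑ B, f A B a b c = 1) :
    (∃ (n : ℕ) (pl : Fin n → C → ℝ)
        (PA : OA → SA → C → Fin n → ℝ) (PB : OB → SB → C → Fin n → ℝ),
        (∀ l c, 0 ≤ pl l c) ∧ (∀ c, ∑ l, pl l c = 1) ∧
        (∀ A a c l, 0 ≤ PA A a c l) ∧ (∀ a c l, ∑ A, PA A a c l = 1) ∧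
        (∀ B b c l, 0 ≤ PB B b c l) ∧ (∀ b c l, ∑ B, PB B b c l = 1) ∧
        (∀ A B a b c, f A B a b c = ∑ l, PA A a c l * PB B b c l * pl l c))
    ↔
    (∃ μ : (SA → OA) → (SB → OB) → C → ℝ,
        (∀ α β c, 0 ≤ μ α β c) ∧
        (∀ c, ∑ α, ∑ β, μ α β c = 1) ∧
        (∀ A B a b c, f A B a b c
          = ∑ α, ∑ β, (if α a = A ∧ β b = B then μ α β c else 0))) := by
  constructor
  · rintro ⟨n, pl, PA, PB, hplnn, hplsum, hPAnn, hPAsum, hPBnn, hPBsum, hrep⟩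
    refine ⟨fun α β c => ∑ l, pl l c * (∏ a, PA (α a) a c l) * (∏ b, PB (β b) b c l),
      ?_, ?_, ?_⟩
    · intro α β c
      refine Finset.sum_nonneg fun l _ => ?_
      have h1 : 0 ≤ ∏ a, PA (α a) a c l := Finset.prod_nonneg fun a _ => hPAnn _ _ _ _
      have h2 : 0 ≤ ∏ b, PB (β b) b c l := Finset.prod_nonneg fun b _ => hPBnn _ _ _ _
      exact mul_nonneg (mul_nonneg (hplnn l c) h1) h2
    · intro c
      have key : ∀ α : SA → OA, ∑ β : SB → OB,
          ∑ l, pl l c * (∏ a, PA (α a) a c l) * (∏ b, PB (β b) b c l)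
          = ∑ l, pl l c * (∏ a, PA (α a) a c l)
              * ∑ β : SB → OB, (∏ b, PB (β b) b c l) := by
        intro α
        rw [Finset.sum_comm]
        exact Finset.sum_congr rfl fun l _ => by rw [Finset.mul_sum]
      simp only [key]
      have hB : ∀ l, ∑ β : SB → OB, (∏ b, PB (β b) b c l) = 1 :=
        fun l => fine_norm (fun b B => PB B b c l) (fun b => hPBsum b c l)
      simp only [hB, mul_one]
      rw [Finset.sum_comm]
      have hA : ∀ l, ∑ α : SA → OA, (∏ a, PA (α a) a c l) = 1 :=
        fun l => fine_norm (fun a A => PA A a c l) (fun a => hPAsum a c l)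
      calc ∑ l, ∑ α : SA → OA, pl l c * ∏ a, PA (α a) a c l
          = ∑ l, pl l c * ∑ α : SA → OA, ∏ a, PA (α a) a c l := by
            exact Finset.sum_congr rfl fun l _ => (Finset.mul_sum _ _ _).symm
        _ = 1 := by simp only [hA, mul_one]; exact hplsum c
    · intro A B a b c
      rw [hrep A B a b c]
      have split : ∀ (α : SA → OA) (β : SB → OB),
          (if α a = A ∧ β b = B then
            ∑ l, pl l c * (∏ a', PA (α a') a' c l) * (∏ b', PB (β b') b' c l) else 0)
          = ∑ l, (if α a = A then ∏ a', PA (α a') a' c l else 0)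
              * (if β b = B then ∏ b', PB (β b') b' c l else 0) * pl l c := by
        intro α β
        by_cases h1 : α a = A <;> by_cases h2 : β b = B <;>
          simp [h1, h2] <;> exact Finset.sum_congr rfl fun l _ => by ring
      simp only [split]
      refine Eq.symm ?_
      calc ∑ α : SA → OA, ∑ β : SB → OB, ∑ l,
              (if α a = A then ∏ a', PA (α a') a' c l else 0)
              * (if β b = B then ∏ b', PB (β b') b' c l else 0) * pl l c
          = ∑ α : SA → OA, ∑ l, ∑ β : SB → OB,
              (if α a = A then ∏ a', PA (α a') a' c l else 0)
              * (if β b = B then ∏ b', PB (β b') b' c l else 0) * pl l c :=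
            Finset.sum_congr rfl fun α _ => Finset.sum_comm
        _ = ∑ l, ∑ α : SA → OA, ∑ β : SB → OB,
              (if α a = A then ∏ a', PA (α a') a' c l else 0)
              * (if β b = B then ∏ b', PB (β b') b' c l else 0) * pl l c :=
            Finset.sum_comm
        _ = ∑ l, PA A a c l * PB B b c l * pl l c := ?_
      refine Finset.sum_congr rfl fun l _ => Eq.symm ?_
      have e1 : ∑ α : SA → OA, (if α a = A then ∏ a', PA (α a') a' c l else 0)
          = PA A a c l := fine_key (fun a' A' => PA A' a' c l) (fun a' => hPAsum a' c l) a A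
      have e2 : ∑ β : SB → OB, (if β b = B then ∏ b', PB (β b') b' c l else 0)
          = PB B b c l := fine_key (fun b' B' => PB B' b' c l) (fun b' => hPBsum b' c l) b B
      calc PA A a c l * PB B b c l * pl l c
          = (∑ α : SA → OA, (if α a = A then ∏ a', PA (α a') a' c l else 0))
            * (∑ β : SB → OB, (if β b = B then ∏ b', PB (β b') b' c l else 0)) * pl l c := by
            rw [e1, e2]
        _ = ∑ α : SA → OA, ∑ β : SB → OB,
              (if α a = A then ∏ a', PA (α a') a' c l else 0)
              * (if β b = B then ∏ b', PB (β b') b' c l else 0) * pl l c := by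
            rw [Finset.sum_mul, Finset.sum_mul]
            refine Finset.sum_congr rfl fun α _ => ?_
            rw [Finset.mul_sum, Finset.sum_mul]
  · rintro ⟨μ, hμnn, hμsum, hrep⟩
    set Λ := (SA → OA) × (SB → OB) with hΛ
    let e : Fin (Fintype.card Λ) ≃ Λ := (Fintype.equivFin Λ).symm
    refine ⟨Fintype.card Λ, fun l c => μ (e l).1 (e l).2 c,
      fun A a c l => if (e l).1 a = A then 1 else 0,
      fun B b c l => if (e l).2 b = B then 1 else 0, ?_, ?_, ?_, ?_, ?_, ?_, ?_⟩
    · intro l c; exact hμnn _ _ _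
    · intro c
      rw [Fintype.sum_equiv e _ (fun p : Λ => μ p.1 p.2 c) (fun l => rfl)]
      rw [Fintype.sum_prod_type]
      exact hμsum c
    · intro A a c l; positivity
    · intro a c l; simp
    · intro B b c l; positivity
    · intro b c l; simp
    · intro A B a b c
      rw [hrep A B a b c]
      have h := Fintype.sum_equiv e
        (fun l => (if (e l).1 a = A then (1:ℝ) else 0) * (if (e l).2 b = B then 1 else 0)
          * μ (e l).1 (e l).2 c)
        (fun p : Λ => (if p.1 a = A then (1:ℝ) else 0) * (if p.2 b = B then 1 else 0)
          * μ p.1 p.2 c)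
        (fun l => rfl)
      show _ = ∑ l, (if (e l).1 a = A then (1:ℝ) else 0) * (if (e l).2 b = B then 1 else 0)
          * μ (e l).1 (e l).2 c
      rw [h, Fintype.sum_prod_type]
      refine Finset.sum_congr rfl fun α _ => Finset.sum_congr rfl fun β _ => ?_
      by_cases h1 : α a = A <;> by_cases h2 : β b = B <;> simp [h1, h2]
end

section
/- Any Bell-local phenomenon with binary (±1-valued) outcomes satisfies the CHSH inequality: for any settings a, a' for Alice and b, b' for Bob, |E(a,b) + E(a,b') + E(a',b) − E(a',b')| ≤ 2, where E(x,y) = Σ_{A,B ∈ {−1,+1}} A·B·f(A,B|x,y,c). -/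
lemma chsh_pointwise (x x' y y' : ℝ) (hx : |x| ≤ 1) (hx' : |x'| ≤ 1)
    (hy : |y| ≤ 1) (hy' : |y'| ≤ 1) :
    |x * y + x * y' + x' * y - x' * y'| ≤ 2 := by
  have h1 := abs_le.mp hy
  have h2 := abs_le.mp hy'
  calc |x * y + x * y' + x' * y - x' * y'|
      = |x * (y + y') + x' * (y - y')| := by ring_nf
    _ ≤ |x * (y + y')| + |x' * (y - y')| := abs_add_le _ _
    _ = |x| * |y + y'| + |x'| * |y - y'| := by rw [abs_mul, abs_mul]
    _ ≤ 1 * |y + y'| + 1 * |y - y'| :=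
        add_le_add (mul_le_mul_of_nonneg_right hx (abs_nonneg _))
          (mul_le_mul_of_nonneg_right hx' (abs_nonneg _))
    _ = |y + y'| + |y - y'| := by ring
    _ ≤ 2 := by
        rcases abs_cases (y + y') with ⟨e1, _⟩ | ⟨e1, _⟩ <;>
          rcases abs_cases (y - y') with ⟨e2, _⟩ | ⟨e2, _⟩ <;> linarith

/-- Any Bell-local phenomenon with ±1-valued outcomes satisfies the CHSH
inequality. Outcomes are encoded by `Bool`, with value `+1` for `true`
and `-1` for `false`. -/
theorem stmt4
    (SA SB C : Type) (n : ℕ)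
    (pl : Fin n → C → ℝ)
    (PA : Bool → SA → C → Fin n → ℝ) (PB : Bool → SB → C → Fin n → ℝ)
    (f : Bool → Bool → SA → SB → C → ℝ)
    (hplnn : ∀ l c, 0 ≤ pl l c) (hplnorm : ∀ c, ∑ l, pl l c = 1)
    (hPAnn : ∀ A a c l, 0 ≤ PA A a c l) (hPAnorm : ∀ a c l, ∑ A, PA A a c l = 1)
    (hPBnn : ∀ B b c l, 0 ≤ PB B b c l) (hPBnorm : ∀ b c l, ∑ B, PB B b c l = 1)
    (hrep : ∀ A B a b c, f A B a b c = ∑ l, PA A a c l * PB B b c l * pl l c)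
    (E : SA → SB → C → ℝ)
    (hE : ∀ x y c, E x y c
      = ∑ A, ∑ B, (if A then (1:ℝ) else -1) * (if B then (1:ℝ) else -1) * f A B x y c)
    (a a' : SA) (b b' : SB) (c : C) :
    |E a b c + E a b' c + E a' b c - E a' b' c| ≤ 2 := by
  have hαb : ∀ x l, |PA true x c l - PA false x c l| ≤ 1 := by
    intro x l
    have h := hPAnorm x c l
    simp [Fintype.sum_bool] at h
    rw [abs_le]
    constructor <;> nlinarith [hPAnn true x c l, hPAnn false x c l]
  have hβb : ∀ y l, |PB true y c l - PB false y c l| ≤ 1 := by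
    intro y l
    have h := hPBnorm y c l
    simp [Fintype.sum_bool] at h
    rw [abs_le]
    constructor <;> nlinarith [hPBnn true y c l, hPBnn false y c l]
  have hEeq : ∀ x y, E x y c
      = ∑ l, (PA true x c l - PA false x c l) * (PB true y c l - PB false y c l) * pl l c := by
    intro x y
    rw [hE]
    simp only [Fintype.sum_bool, hrep]
    norm_num
    have expand : ∑ l : Fin n, (PA true x c l - PA false x c l) * (PB true y c l - PB false y c l) * pl l c
        = ((∑ l, PA true x c l * PB true y c l * pl l c)
          - (∑ l, PA true x c l * PB false y c l * pl l c))
          - ((∑ l, PA false x c l * PB true y c l * pl l c)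
          - (∑ l, PA false x c l * PB false y c l * pl l c)) := by
      rw [← Finset.sum_sub_distrib, ← Finset.sum_sub_distrib, ← Finset.sum_sub_distrib]
      exact Finset.sum_congr rfl (fun l _ => by ring)
    rw [expand]
    ring
  rw [hEeq, hEeq, hEeq, hEeq]
  rw [← Finset.sum_add_distrib, ← Finset.sum_add_distrib, ← Finset.sum_sub_distrib]
  calc |∑ l, ((PA true a c l - PA false a c l) * (PB true b c l - PB false b c l) * pl l c
        + (PA true a c l - PA false a c l) * (PB true b' c l - PB false b' c l) * pl l c
        + (PA true a' c l - PA false a' c l) * (PB true b c l - PB false b c l) * pl l c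
        - (PA true a' c l - PA false a' c l) * (PB true b' c l - PB false b' c l) * pl l c)|
      ≤ ∑ l, |(PA true a c l - PA false a c l) * (PB true b c l - PB false b c l) * pl l c
        + (PA true a c l - PA false a c l) * (PB true b' c l - PB false b' c l) * pl l c
        + (PA true a' c l - PA false a' c l) * (PB true b c l - PB false b c l) * pl l c
        - (PA true a' c l - PA false a' c l) * (PB true b' c l - PB false b' c l) * pl l c| :=
        Finset.abs_sum_le_sum_abs _ _
    _ ≤ ∑ l, 2 * pl l c := by
        apply Finset.sum_le_sum
        intro l _
        have key := chsh_pointwise (PA true a c l - PA false a c l)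
          (PA true a' c l - PA false a' c l) (PB true b c l - PB false b c l)
          (PB true b' c l - PB false b' c l) (hαb a l) (hαb a' l) (hβb b l) (hβb b' l)
        calc |(PA true a c l - PA false a c l) * (PB true b c l - PB false b c l) * pl l c
            + (PA true a c l - PA false a c l) * (PB true b' c l - PB false b' c l) * pl l c
            + (PA true a' c l - PA false a' c l) * (PB true b c l - PB false b c l) * pl l c
            - (PA true a' c l - PA false a' c l) * (PB true b' c l - PB false b' c l) * pl l c|
            = |((PA true a c l - PA false a c l) * (PB true b c l - PB false b c l)
              + (PA true a c l - PA false a c l) * (PB true b' c l - PB false b' c l)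
              + (PA true a' c l - PA false a' c l) * (PB true b c l - PB false b c l)
              - (PA true a' c l - PA false a' c l) * (PB true b' c l - PB false b' c l))| * |pl l c| := by
              rw [← abs_mul]; ring_nf
          _ ≤ 2 * |pl l c| := by gcongr
          _ = 2 * pl l c := by rw [abs_of_nonneg (hplnn l c)]
    _ = 2 := by rw [← Finset.mul_sum, hplnorm, mul_one]
end

section
/- In a finite DAG equipped with a map from vertices to spacetime points in Minkowski space such that every edge goes from a point to a point in its (strict) future light-cone (relativistic causality), if a free-choice vertex a (no parents) satisfies the agent-causation principle, then any vertex correlated with a lies in the future light-cone of a (the local agency principle). -/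
/-- The causal-future relation on Minkowski space (time component paired
with 3-dimensional Euclidean space): x ≺ y iff x ≠ y and the spatial
separation is at most the time difference. -/
def minkPrec (x y : ℝ × EuclideanSpace ℝ (Fin 3)) : Prop :=
  x ≠ y ∧ ‖y.2 - x.2‖ ≤ y.1 - x.1

lemma minkPrec_trans {x y z : ℝ × EuclideanSpace ℝ (Fin 3)}
    (hxy : minkPrec x y) (hyz : minkPrec y z) : minkPrec x z := by
  obtain ⟨hne1, h1⟩ := hxy
  obtain ⟨hne2, h2⟩ := hyz
  have htri : ‖z.2 - x.2‖ ≤ ‖z.2 - y.2‖ + ‖y.2 - x.2‖ := by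
    simpa using norm_add_le (z.2 - y.2) (y.2 - x.2)
  have hmain : ‖z.2 - x.2‖ ≤ z.1 - x.1 := by linarith
  refine ⟨?_, hmain⟩
  intro hxz
  rw [← hxz] at h2
  have hn1 := norm_nonneg (y.2 - x.2)
  have hn2 := norm_nonneg (x.2 - y.2)
  have h0 : ‖y.2 - x.2‖ = 0 := by linarith
  have ht : y.1 = x.1 := by linarith
  have hs : y.2 = x.2 := sub_eq_zero.mp (norm_eq_zero.mp h0)
  exact hne1 (Prod.ext ht.symm hs.symm)

/-- If every DAG edge respects relativistic causality (points to the strict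
causal future) and a free-choice vertex `a` satisfies agent-causation
(every vertex correlated with `a` is a descendant of `a`), then every
vertex correlated with `a` lies in the future light-cone of `a`
(local agency). -/
theorem stmt15
    (V : Type) [Fintype V] (edge : V → V → Prop) (correlated : V → V → Prop)
    (φ : V → ℝ × EuclideanSpace ℝ (Fin 3))
    (hacyc : ∀ v, ¬ Relation.TransGen edge v v)
    (hedge : ∀ u v, edge u v → minkPrec (φ u) (φ v))
    (a : V)
    (hAC : ∀ Xv, correlated Xv a → Relation.TransGen edge a Xv) :
    ∀ Xv, correlated Xv a → minkPrec (φ a) (φ Xv) := by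
  intro Xv hc
  have h := hAC Xv hc
  clear hc
  induction h with
  | single h => exact hedge _ _ h
  | tail _ h ih => exact minkPrec_trans ih (hedge _ _ h)
end
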